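/- arXiv:1602.06451 — 2 statements merged into one kernel-verified Lean document; each statement's English description precedes it below -/
import Mathlib

section
/- Let $W$ be a Coxeter group, $\mathfrak{w} = s_1\cdots s_n$ a reduced word for $w$, $x \le w$, and $\lambda(\mathscr{C}^-_{x,\mathfrak{w}}) = (j_d,\ldots,j_1)$ (with $j_1 < \cdots < j_d$) the decreasing label of the unique maximal chain in $[x,w]$ with decreasing label. If $j_1 = 1$, then $x < s_1 x$. -/
open CoxeterSystem

variable {B W : Type*} [Group W] {M : CoxeterMatrix B}

/-- The Bruhat order on a Coxeter group. -/
def CoxeterSystem.bruhatLE (cs : CoxeterSystem M W) : W → W → Prop :=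
  Relation.ReflTransGen (fun a b => cs.length a < cs.length b ∧ ∃ t, cs.IsReflection t ∧ b = a * t)

/-- The strict Bruhat order. -/
def CoxeterSystem.bruhatLT (cs : CoxeterSystem M W) (x y : W) : Prop :=
  cs.bruhatLE x y ∧ x ≠ y

/-- Delete from the word `ω` the letters at the (0-based) positions in `S`. -/
def delIdxs {B : Type*} (ω : List B) (S : List ℕ) : List B :=
  (ω.zipIdx.filter (fun p => decide (p.2 ∉ S))).map Prod.fst

open Classical in
/-- `λ_{x,ω}`: the increasing list of (0-based) positions `i` such that
`x ≤ s_1 ⋯ ŝ_i ⋯ s_n` (the word with the letter at position `i` omitted). -/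
noncomputable def CoxeterSystem.lambdaList (cs : CoxeterSystem M W) (x : W) (ω : List B) :
    List ℕ :=
  (List.range ω.length).filter
    (fun i => decide (cs.bruhatLE x (cs.wordProd (ω.eraseIdx i))))

/-- `y` covers `x` in Bruhat order. -/
def CoxeterSystem.covers (cs : CoxeterSystem M W) (y x : W) : Prop :=
  cs.bruhatLT x y ∧ cs.length y = cs.length x + 1

/-- `L` is the label of a maximal chain `w = w_0 → w_1 → ⋯ → w_d = x` of the Bruhat interval
`[x, w]` with respect to the reduced word `ω` of `w`: `L` records the (0-based) positions
deleted at each covering step, `w_k` being obtained from `ω` by deleting the positions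
`L.take k`. -/
def CoxeterSystem.IsMaxChainLabel (cs : CoxeterSystem M W) (ω : List B) (x : W)
    (L : List ℕ) : Prop :=
  L.Nodup ∧ (∀ i ∈ L, i < ω.length) ∧
    (∀ k < L.length, cs.covers (cs.wordProd (delIdxs ω (L.take k)))
      (cs.wordProd (delIdxs ω (L.take (k + 1))))) ∧
    cs.wordProd (delIdxs ω L) = x

/-! The last covering step of the chain deletes position `0`, i.e. the first letter `s_1` of the
word; since no earlier step deletes it, the element covering `x` in the chain is `s_1 x`. -/

theorem delIdxs_cons_eq_cons_delIdxs_append_zero (a : B) (t : List B) {S : List ℕ}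
    (h0 : 0 ∉ S) : delIdxs (a :: t) S = a :: delIdxs (a :: t) (S ++ [0]) := by
  have htail : (t.zipIdx 1).filter (fun p => decide (p.2 ∉ S)) =
      (t.zipIdx 1).filter (fun p => decide (p.2 ∉ S ++ [0])) := by
    refine List.filter_congr fun p hp => ?_
    have hpos : 1 ≤ p.2 := List.le_snd_of_mem_zipIdx hp
    simp [Nat.one_le_iff_ne_zero.mp hpos]
  rw [delIdxs, delIdxs, List.zipIdx_cons, List.filter_cons_of_pos (by simpa using h0),
    List.filter_cons_of_neg (by simp), zero_add, htail, List.map_cons]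

theorem CoxeterSystem.IsMaxChainLabel.covers_of_append_singleton {cs : CoxeterSystem M W}
    {ω : List B} {x : W} {L : List ℕ} {j : ℕ} (hL : cs.IsMaxChainLabel ω x (L ++ [j])) :
    cs.covers (cs.wordProd (delIdxs ω L)) x := by
  obtain ⟨-, -, hcov, hx⟩ := hL
  have h := hcov L.length (by simp)
  rwa [List.take_left' rfl, List.take_of_length_le (by simp), hx] at h

theorem dec_chain_last_zero_lt_general (cs : CoxeterSystem M W) (ω : List B) (x : W)
    (L : List ℕ) (hωne : ω ≠ [])
    (hL : cs.IsMaxChainLabel ω x L)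
    (hne : L ≠ []) (hlast : L.getLast hne = 0) :
    cs.bruhatLT x (cs.simple (ω.head hωne) * x) := by
  obtain ⟨a, t, rfl⟩ := List.exists_cons_of_ne_nil hωne
  have hsplit : L.dropLast ++ [0] = L := hlast ▸ List.dropLast_append_getLast hne
  rw [← hsplit] at hL
  have h0 : 0 ∉ L.dropLast := by
    have hnd := hL.1
    simp only [List.nodup_append, List.mem_singleton] at hnd
    exact fun h => hnd.2.2 0 h 0 rfl rfl
  have hx : cs.wordProd (delIdxs (a :: t) (L.dropLast ++ [0])) = x := hL.2.2.2
  have hcov := hL.covers_of_append_singleton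
  rw [delIdxs_cons_eq_cons_delIdxs_append_zero a t h0, wordProd_cons, hx] at hcov
  exact hcov.1

/-- Lemma 6.2 (iv), first part: let `L = λ(𝒞⁻_{x,ω}) = (j_d, …, j_1)` be the decreasing
(equivalently, lexicographically maximal) label of a maximal chain of `[x, w]` with respect to
the reduced word `ω` of `w`. If `j_1 = 1` (0-based: the last entry is `0`), then `x < s_1 x`. -/
theorem dec_chain_last_zero_lt (cs : CoxeterSystem M W) (ω : List B) (w x : W)
    (L : List ℕ) (hωne : ω ≠ [])
    (hred : cs.IsReduced ω) (hw : cs.wordProd ω = w) (hxw : cs.bruhatLE x w)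
    (hL : cs.IsMaxChainLabel ω x L) (hsort : L.Pairwise (· > ·))
    (hlexmax : ∀ L', cs.IsMaxChainLabel ω x L' → ¬ List.Lex (· < ·) L L')
    (hne : L ≠ []) (hlast : L.getLast hne = 0) :
    cs.bruhatLT x (cs.simple (ω.head hωne) * x) :=
  dec_chain_last_zero_lt_general cs ω x L hωne hL hne hlast
end

section
/- Let $W$ be a Coxeter group, $\mathfrak{w} = s_1\cdots s_n$ a reduced word for $w$, and $x \le w$. Suppose $j_1 = 1$, where $(j_d, \ldots, j_1)$ is the decreasing label $\lambda(\mathscr{C}^-_{x,\mathfrak{w}})$. Then $x \le s_1 w$, and $\lambda_{x, s_1\mathfrak{w}} = (\lambda_{x,\mathfrak{w}} \setminus \{1\}) - 1$, i.e. for all $1 < t \le n$: $x \le s_1\cdots\hat{s}_t\cdots s_n$ if and only if $x \le s_2\cdots\hat{s}_t\cdots s_n$. -/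
open CoxeterSystem

variable {B W : Type*} [Group W] {M : CoxeterMatrix B}

/-!
The last step of the chain deletes the first letter, so `ℓ (s₁ x) = ℓ x + 1`. Everything then
follows from the lifting property: if `u ≤ w`, `u < s u` and `s w < w`, then `u ≤ s w`; hence
`x ≤ s₁ v ↔ x ≤ v` for every `v`, and we take `v = w` and `v = s₂ ⋯ ŝₜ ⋯ sₙ`.

The lifting property is proved by induction along a Bruhat chain; its only nontrivial input is
the strong exchange property. That in turn comes from the action of `W` on `W × ZMod 2` in which
`sᵢ` sends `(t, ε)` to `(sᵢ t sᵢ, ε + [t = sᵢ])`: the braid relations hold because every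
reflection occurs an even number of times in the inversion sequence of the word
`(sᵢ sⱼ)^{m(i,j)}`. For a word `ω`, `reflParity (π ω) t` is the parity of the number of
occurrences of `t` in the right inversion sequence of `ω`; being a function of `π ω` alone, it
equals `1` exactly when `ℓ (π ω * t) < ℓ (π ω)`, and then `t` occurs in that sequence.
-/

namespace CoxeterSystem

open List

variable (cs : CoxeterSystem M W)

local prefix:100 "s " => cs.simple
local prefix:100 "π " => cs.wordProd
local prefix:100 "ℓ " => cs.length
local prefix:100 "ris " => cs.rightInvSeq
local prefix:100 "lis " => cs.leftInvSeq

theorem rightInvSeq_eq_map_leftInvSeq (ω : List B) :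
    ris ω = (lis ω).map (MulAut.conj (π ω)⁻¹) := by
  induction ω with
  | nil => rfl
  | cons i ω ih =>
    simp only [rightInvSeq, leftInvSeq, ih, map_cons, map_map, wordProd_cons, mul_inv_rev,
      inv_simple, cons.injEq]
    refine ⟨by simp [mul_assoc], map_congr_left fun a _ => ?_⟩
    simp only [Function.comp_apply, MulAut.conj_apply, mul_inv_rev, inv_inv, inv_simple,
      mul_assoc, simple_mul_simple_cancel_left]

theorem getElem_leftInvSeq_alternatingWord_two_mul_add (i i' : B) (k : ℕ) (hk : k < M i i') :
    (lis (alternatingWord i i' (2 * M i i')))[M i i' + k]'(by simp; omega) =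
      (lis (alternatingWord i i' (2 * M i i')))[k]'(by simp; omega) := by
  rw [getElem_leftInvSeq_alternatingWord _ _ _ _ _ (by omega),
    getElem_leftInvSeq_alternatingWord _ _ _ _ _ (by omega),
    prod_alternatingWord_eq_mul_pow, prod_alternatingWord_eq_mul_pow,
    show (2 * (M i i' + k) + 1) / 2 = M i i' + k by omega, show (2 * k + 1) / 2 = k by omega,
    pow_add, simple_mul_simple_pow', one_mul]
  simp [parity_simps]

theorem leftInvSeq_alternatingWord_two_mul_eq_append (i i' : B) :
    lis (alternatingWord i i' (2 * M i i')) =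
      (lis (alternatingWord i i' (2 * M i i'))).take (M i i') ++
        (lis (alternatingWord i i' (2 * M i i'))).take (M i i') := by
  conv_lhs => rw [← take_append_drop (M i i') (lis (alternatingWord i i' (2 * M i i')))]
  congr 1
  refine ext_getElem (by simp; omega) fun k _ h => ?_
  simp only [getElem_drop, getElem_take]
  exact getElem_leftInvSeq_alternatingWord_two_mul_add cs i i' k (by simp at h; omega)

theorem wordProd_alternatingWord_two_mul (i i' : B) :
    π (alternatingWord i i' (2 * M i i')) = 1 := by
  rw [prod_alternatingWord_eq_mul_pow, if_pos (even_two_mul _), one_mul,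
    Nat.mul_div_cancel_left _ two_pos, simple_mul_simple_pow]

theorem rightInvSeq_alternatingWord_two_mul_eq_append (i i' : B) :
    ris (alternatingWord i i' (2 * M i i')) =
      (lis (alternatingWord i i' (2 * M i i'))).take (M i i') ++
        (lis (alternatingWord i i' (2 * M i i'))).take (M i i') := by
  rw [rightInvSeq_eq_map_leftInvSeq, wordProd_alternatingWord_two_mul, inv_one, map_one,
    MulAut.coe_one, map_id]
  exact leftInvSeq_alternatingWord_two_mul_eq_append cs i i'

open Classical in
noncomputable def parityPerm (i : B) : Equiv.Perm (W × ZMod 2) :=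
  Function.Involutive.toPerm (fun p => (s i * p.1 * s i, p.2 + if p.1 = s i then 1 else 0))
    fun ⟨t, ε⟩ => by
      by_cases ht : t = s i
      · simp [ht, add_assoc, CharTwo.add_self_eq_zero]
      · simp [ht, mul_assoc, mul_eq_one_iff_eq_inv, inv_simple]

open Classical in
theorem parityPerm_apply (i : B) (t : W) (ε : ZMod 2) :
    cs.parityPerm i (t, ε) = (s i * t * s i, ε + if t = s i then 1 else 0) := rfl

open Classical in
theorem prod_map_parityPerm_apply (ω : List B) (t : W) (ε : ZMod 2) :
    (ω.map cs.parityPerm).prod (t, ε) =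
      (π ω * t * (π ω)⁻¹, ε + ((ris ω).count t : ZMod 2)) := by
  induction ω generalizing t ε with
  | nil => simp
  | cons i ω ih =>
    have hiff : π ω * t * (π ω)⁻¹ = s i ↔ (π ω)⁻¹ * s i * π ω = t := by
      constructor <;> intro h <;> rw [← h] <;> group
    simp only [List.map_cons, List.prod_cons, Equiv.Perm.mul_apply, ih, parityPerm_apply,
      rightInvSeq, List.count_cons, hiff, beq_iff_eq, wordProd_cons, mul_inv_rev, inv_simple,
      Prod.mk.injEq]
    refine ⟨by group, ?_⟩
    split_ifs <;> push_cast <;> ring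

theorem parityPerm_mul_pow (i i' : B) (m : ℕ) :
    (cs.parityPerm i * cs.parityPerm i') ^ m =
      ((alternatingWord i i' (2 * m)).map cs.parityPerm).prod := by
  induction m with
  | zero => simp [alternatingWord]
  | succ m ih =>
    rw [show 2 * (m + 1) = 2 * m + 1 + 1 by ring, alternatingWord_succ', alternatingWord_succ',
      if_neg (by simp [parity_simps]), if_pos (even_two_mul m), pow_succ', ih]
    simp [mul_assoc]

theorem isLiftable_parityPerm : M.IsLiftable cs.parityPerm := by
  intro i i'
  classical
  ext ⟨t, ε⟩ : 2
  · simp [parityPerm_mul_pow, prod_map_parityPerm_apply, wordProd_alternatingWord_two_mul]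
  · simp only [parityPerm_mul_pow, prod_map_parityPerm_apply,
      rightInvSeq_alternatingWord_two_mul_eq_append, List.count_append, Nat.cast_add,
      CharTwo.add_self_eq_zero, add_zero, Equiv.Perm.one_apply]

noncomputable def parityRep : W →* Equiv.Perm (W × ZMod 2) :=
  cs.lift ⟨cs.parityPerm, cs.isLiftable_parityPerm⟩

theorem parityRep_wordProd (ω : List B) : cs.parityRep (π ω) = (ω.map cs.parityPerm).prod := by
  rw [wordProd, map_list_prod, List.map_map]
  congr 1
  exact List.map_congr_left fun i _ => cs.lift_apply_simple cs.isLiftable_parityPerm i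

noncomputable def reflParity (w t : W) : ZMod 2 := (cs.parityRep w (t, 0)).2

theorem parityRep_apply (w t : W) (ε : ZMod 2) :
    cs.parityRep w (t, ε) = (w * t * w⁻¹, ε + cs.reflParity w t) := by
  obtain ⟨ω, rfl⟩ := cs.wordProd_surjective w
  simp [reflParity, parityRep_wordProd, prod_map_parityPerm_apply]

open Classical in
theorem reflParity_wordProd (ω : List B) (t : W) :
    cs.reflParity (π ω) t = (ris ω).count t := by
  simp [reflParity, parityRep_wordProd, prod_map_parityPerm_apply]

theorem reflParity_mul (u v t : W) :
    cs.reflParity (u * v) t = cs.reflParity v t + cs.reflParity u (v * t * v⁻¹) := by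
  have h := congrArg Prod.snd (cs.parityRep_apply (u * v) t 0)
  rw [map_mul, Equiv.Perm.mul_apply, parityRep_apply, parityRep_apply] at h
  simpa using h.symm

theorem reflParity_one (t : W) : cs.reflParity 1 t = 0 := by
  simp [reflParity]

theorem reflParity_self {t : W} (ht : cs.IsReflection t) : cs.reflParity t t = 1 := by
  obtain ⟨u, i, rfl⟩ := ht
  have hsimple : cs.reflParity (s i) (s i) = 1 := by
    simpa using cs.reflParity_wordProd [i] (s i)
  have hcancel := cs.reflParity_mul u u⁻¹ (u * s i * u⁻¹)
  have hsplit := cs.reflParity_mul u (s i * u⁻¹) (u * s i * u⁻¹)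
  have hsplit' := cs.reflParity_mul (s i) u⁻¹ (u * s i * u⁻¹)
  have e₁ : u⁻¹ * (u * s i * u⁻¹) * u = s i := by group
  have e₂ : s i * u⁻¹ * (u * s i * u⁻¹) * (u * s i) = s i := by
    simp [mul_assoc, simple_mul_simple_cancel_left]
  have e₃ : u * (s i * u⁻¹) = u * s i * u⁻¹ := by group
  simp only [mul_inv_cancel, reflParity_one, mul_inv_rev, inv_inv, inv_simple, e₁, e₂, e₃]
    at hcancel hsplit hsplit'
  rw [hsplit, hsplit', hsimple]
  linear_combination (-1 : ZMod 2) * hcancel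

theorem mem_rightInvSeq_of_reflParity_eq_one {ω : List B} {t : W}
    (h : cs.reflParity (π ω) t = 1) : t ∈ ris ω := by
  classical
  rw [reflParity_wordProd] at h
  refine List.count_pos_iff.mp (Nat.pos_of_ne_zero fun h0 => ?_)
  simp [h0] at h

theorem length_mul_lt_of_reflParity_eq_one {w t : W} (h : cs.reflParity w t = 1) :
    ℓ (w * t) < ℓ w := by
  obtain ⟨ω, hω, rfl⟩ := cs.exists_isReduced w
  exact (cs.isRightInversion_of_mem_rightInvSeq hω (cs.mem_rightInvSeq_of_reflParity_eq_one h)).2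

theorem reflParity_eq_one_of_length_mul_lt {w t : W} (ht : cs.IsReflection t)
    (h : ℓ (w * t) < ℓ w) : cs.reflParity w t = 1 := by
  by_contra hne
  have h0 : cs.reflParity w t = 0 := by
    generalize cs.reflParity w t = a at hne
    revert a
    decide
  have hup : cs.reflParity (w * t) t = 1 := by
    rw [reflParity_mul, ht.mul_self, one_mul, ht.inv, reflParity_self cs ht, h0, add_zero]
  have := cs.length_mul_lt_of_reflParity_eq_one hup
  rw [mul_assoc, ht.mul_self, mul_one] at this
  omega

/-- The strong exchange property. -/
theorem exists_wordProd_eraseIdx_eq_mul (ω : List B) {t : W} (ht : cs.IsReflection t)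
    (h : ℓ (π ω * t) < ℓ (π ω)) : ∃ j < ω.length, π (ω.eraseIdx j) = π ω * t := by
  obtain ⟨j, hj, rfl⟩ := List.mem_iff_getElem.mp
    (cs.mem_rightInvSeq_of_reflParity_eq_one (cs.reflParity_eq_one_of_length_mul_lt ht h))
  refine ⟨j, by simpa using hj, ?_⟩
  rw [← List.getD_eq_getElem _ 1 hj, wordProd_mul_getD_rightInvSeq]

theorem bruhatLE_mul_of_length_lt {a t : W} (ht : cs.IsReflection t) (h : ℓ a < ℓ (a * t)) :
    cs.bruhatLE a (a * t) :=
  .single ⟨h, t, ht, rfl⟩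

theorem bruhatLE_simple_mul {i : B} {a : W} (h : ℓ a < ℓ (s i * a)) :
    cs.bruhatLE a (s i * a) := by
  have hconj : s i * a = a * (a⁻¹ * s i * a) := by group
  rw [hconj] at h ⊢
  exact cs.bruhatLE_mul_of_length_lt (by simpa using (cs.isReflection_simple i).conj a⁻¹) h

theorem simple_mul_bruhatLE {i : B} {a : W} (h : ℓ (s i * a) < ℓ a) :
    cs.bruhatLE (s i * a) a := by
  simpa using cs.bruhatLE_simple_mul (i := i) (a := s i * a) (by simpa using h)

theorem eq_simple_mul_of_length_mul_eq_add_one {i : B} {d t : W} (ht : cs.IsReflection t)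
    (hcov : ℓ (d * t) = ℓ d + 1) (hdesc : ℓ (s i * (d * t)) < ℓ (d * t))
    (hasc : ℓ d < ℓ (s i * d)) : d = s i * (d * t) := by
  obtain ⟨ρ, hρ, hρc⟩ := cs.exists_isReduced (s i * (d * t))
  have hc : d * t = π (i :: ρ) := by rw [wordProd_cons, ← hρc, simple_mul_simple_cancel_left]
  have hct : d * t * t = d := by rw [mul_assoc, ht.mul_self, mul_one]
  obtain ⟨j, -, hj⟩ := cs.exists_wordProd_eraseIdx_eq_mul (i :: ρ) ht
    (by rw [← hc, hct]; omega)
  rw [← hc, hct] at hj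
  cases j with
  | zero => simpa [hρc] using hj.symm
  | succ k =>
    have hlen : ℓ (s i * d) ≤ (ρ.eraseIdx k).length := by
      rw [← hj, eraseIdx_cons_succ, wordProd_cons, simple_mul_simple_cancel_left]
      exact cs.length_wordProd_le _
    have hρlen : ρ.length + 1 = ℓ (d * t) := by
      have := cs.length_simple_mul (d * t) i
      rw [hρc, hρ.eq] at this hdesc
      omega
    have := List.length_eraseIdx_le ρ k
    omega

theorem bruhatLE_simple_mul_mul {i : B} {d t : W} (ht : cs.IsReflection t)
    (hlt : ℓ d < ℓ (d * t)) (hdesc : ℓ (s i * (d * t)) < ℓ (d * t))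
    (hasc : ℓ d < ℓ (s i * d)) : cs.bruhatLE d (s i * (d * t)) := by
  by_cases hcov : ℓ (d * t) = ℓ d + 1
  · rw [← cs.eq_simple_mul_of_length_mul_eq_add_one ht hcov hdesc hasc]
    exact .refl
  · have hne := ht.length_mul_left_ne (s i * d)
    have h₁ := cs.length_simple_mul d i
    have h₂ := cs.length_simple_mul (d * t) i
    rw [← mul_assoc] at hdesc h₂ ⊢
    exact (cs.bruhatLE_simple_mul hasc).trans (cs.bruhatLE_mul_of_length_lt ht (by omega))

/-- The lifting property of the Bruhat order. -/
theorem bruhatLE_simple_mul_of_bruhatLE {i : B} {u w : W} (hu : cs.bruhatLE u w)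
    (hasc : ℓ u < ℓ (s i * u)) (hdesc : ℓ (s i * w) < ℓ w) : cs.bruhatLE u (s i * w) := by
  induction hu with
  | refl => omega
  | @tail d c hud hstep ih =>
    obtain ⟨hlt, t, ht, rfl⟩ := hstep
    rcases cs.length_simple_mul d i with hd | hd
    · exact hud.trans (cs.bruhatLE_simple_mul_mul ht hlt hdesc (by omega))
    · have h₂ := cs.length_simple_mul (d * t) i
      refine (ih (by omega)).trans ?_
      rw [← mul_assoc] at h₂ ⊢
      exact cs.bruhatLE_mul_of_length_lt ht (by omega)

theorem bruhatLE_simple_mul_iff {i : B} {x : W} (hasc : ℓ x < ℓ (s i * x)) (v : W) :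
    cs.bruhatLE x (s i * v) ↔ cs.bruhatLE x v := by
  rcases cs.length_simple_mul v i with h | h
  · refine ⟨fun hx => ?_, fun hx => hx.trans (cs.bruhatLE_simple_mul (by omega))⟩
    simpa using cs.bruhatLE_simple_mul_of_bruhatLE hx hasc
      (by rw [simple_mul_simple_cancel_left]; omega)
  · exact ⟨fun hx => hx.trans (cs.simple_mul_bruhatLE (by omega)),
      fun hx => cs.bruhatLE_simple_mul_of_bruhatLE hx hasc (by omega)⟩

end CoxeterSystem

theorem delIdxs_cons_of_zero_notMem (b : B) (ω : List B) {S : List ℕ}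
    (h0 : 0 ∉ S) : delIdxs (b :: ω) S = b :: delIdxs (b :: ω) (S ++ [0]) := by
  have hpos : ∀ p ∈ ω.zipIdx 1, p.2 ≠ 0 := fun p hp => by
    have := (List.mem_zipIdx hp).1
    omega
  simp only [delIdxs, List.zipIdx_cons, List.filter_cons, h0, List.mem_append, List.mem_singleton]
  simp only [not_false_eq_true, decide_true, ↓reduceIte, or_true, not_true_eq_false, decide_false,
    Bool.false_eq_true, List.map_cons, List.cons.injEq, true_and]
  congr 1
  exact List.filter_congr fun p hp => by simp [hpos p hp]

theorem CoxeterSystem.IsMaxChainLabel.length_simple_mul_of_getLast_eq_zero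
    {cs : CoxeterSystem M W} {b : B} {ω : List B} {x : W} {L : List ℕ}
    (hL : cs.IsMaxChainLabel (b :: ω) x L) (hne : L ≠ [])
    (hlast : L.getLast hne = 0) : cs.length (cs.simple b * x) = cs.length x + 1 := by
  obtain ⟨hnodup, -, hcov, hx⟩ := hL
  have hL : L.dropLast ++ [0] = L := hlast ▸ List.dropLast_append_getLast hne
  have h0 : 0 ∉ L.dropLast := fun h =>
    List.disjoint_of_nodup_append (by rwa [hL]) h (List.mem_singleton_self 0)
  have hlen : L.length - 1 + 1 = L.length := Nat.succ_pred_eq_of_pos (List.length_pos_iff.mpr hne)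
  have hstep := (hcov (L.length - 1) (by omega)).2
  rwa [hlen, List.take_length, ← List.dropLast_eq_take, delIdxs_cons_of_zero_notMem b ω h0, hL,
    wordProd_cons, hx] at hstep

theorem dec_chain_last_zero_lambda_general (cs : CoxeterSystem M W) (ω : List B) (w x : W)
    (L : List ℕ) (hωne : ω ≠ [])
    (hred : cs.IsReduced ω) (hw : cs.wordProd ω = w) (hxw : cs.bruhatLE x w)
    (hL : cs.IsMaxChainLabel ω x L)
    (hne : L ≠ []) (hlast : L.getLast hne = 0) :
    cs.bruhatLE x (cs.wordProd ω.tail) ∧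
    ∀ t, 0 < t → t < ω.length →
      (cs.bruhatLE x (cs.wordProd (ω.eraseIdx t)) ↔
        cs.bruhatLE x (cs.wordProd (ω.tail.eraseIdx (t - 1)))) := by
  obtain ⟨b, ω, rfl⟩ := List.exists_cons_of_ne_nil hωne
  have hasc : cs.length x < cs.length (cs.simple b * x) := by
    rw [hL.length_simple_mul_of_getLast_eq_zero hne hlast]
    exact Nat.lt_succ_self _
  have hw' : cs.simple b * w = cs.wordProd ω := by
    rw [← hw, wordProd_cons, simple_mul_simple_cancel_left]
  have hdesc : cs.length (cs.simple b * w) < cs.length w := by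
    rw [hw', ← hw, hred.eq, List.length_cons]
    exact Nat.lt_succ_of_le (cs.length_wordProd_le ω)
  refine ⟨hw' ▸ cs.bruhatLE_simple_mul_of_bruhatLE hxw hasc hdesc, fun t ht _ => ?_⟩
  obtain ⟨t, rfl⟩ := Nat.exists_eq_add_of_lt ht
  simpa [wordProd_cons] using cs.bruhatLE_simple_mul_iff hasc (cs.wordProd (ω.eraseIdx t))

/-- Lemma A.2, first case: if the decreasing (lexicographically maximal) maximal chain label
`λ(𝒞⁻_{x,ω}) = (j_d, …, j_1)` has `j_1 = 1` (0-based: last entry `0`), then `x ≤ s_1 w`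
and `λ_{x, s_1ω} = (λ_{x,ω} \ {1}) - 1`; that is, for every position `1 < t ≤ n`,
`x ≤ s_1 ⋯ ŝ_t ⋯ s_n` if and only if `x ≤ s_2 ⋯ ŝ_t ⋯ s_n`. -/
theorem dec_chain_last_zero_lambda (cs : CoxeterSystem M W) (ω : List B) (w x : W)
    (L : List ℕ) (hωne : ω ≠ [])
    (hred : cs.IsReduced ω) (hw : cs.wordProd ω = w) (hxw : cs.bruhatLE x w)
    (hL : cs.IsMaxChainLabel ω x L) (hsort : L.Pairwise (· > ·))
    (hlexmax : ∀ L', cs.IsMaxChainLabel ω x L' → ¬ List.Lex (· < ·) L L')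
    (hne : L ≠ []) (hlast : L.getLast hne = 0) :
    cs.bruhatLE x (cs.wordProd ω.tail) ∧
    ∀ t, 0 < t → t < ω.length →
      (cs.bruhatLE x (cs.wordProd (ω.eraseIdx t)) ↔
        cs.bruhatLE x (cs.wordProd (ω.tail.eraseIdx (t - 1)))) :=
  dec_chain_last_zero_lambda_general cs ω w x L hωne hred hw hxw hL hne hlast
end
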